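/- arXiv:1306.3161 — 2 statements merged into one kernel-verified Lean document; each statement's English description precedes it below -/
import Mathlib

section
/- The SVM- objective is unbounded below: for any C > 0 and \gamma > 0, and any nonzero correcting vector \tilde{z} (taking all \tilde{z}_i equal to \tilde{z}), the function (1/2)(||w||^2 - \gamma||\tilde{w}||^2) + C \sum_i (\langle \tilde{w}, \tilde{z}_i \rangle + \tilde{b}) is unbounded below on the feasible set {(w,b,\tilde{w},\tilde{b}) : y_i(\langle w,z_i\rangle + b) \ge 1 - \langle \tilde{w},\tilde{z}_i\rangle - \tilde{b}, \langle \tilde{w},\tilde{z}_i\rangle + \tilde{b} \ge 0}. -/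
open scoped RealInnerProductSpace

open Filter in
theorem exists_sub_mul_sq_lt {a : ℝ} (ha : 0 < a) (c M : ℝ) : ∃ t : ℝ, c - a * t ^ 2 < M := by
  have h : Tendsto (fun t : ℝ => c - a * t ^ 2) atTop atBot :=
    tendsto_atBot_add_const_left _ c <| tendsto_neg_atTop_atBot.comp <|
      (tendsto_pow_atTop two_ne_zero).const_mul_atTop ha
  exact (h.eventually (eventually_lt_atBot M)).exists

theorem real_inner_smul_self_add_one_sub_mul_norm_sq {F : Type*} [NormedAddCommGroup F]
    [InnerProductSpace ℝ F] (t : ℝ) (v : F) : ⟪t • v, v⟫ + (1 - t * ‖v‖ ^ 2) = 1 := by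
  rw [real_inner_smul_left, real_inner_self_eq_norm_sq]
  ring

theorem svm_minus_unbounded_below_general
    {E F : Type*} [NormedAddCommGroup E] [InnerProductSpace ℝ E]
    [NormedAddCommGroup F] [InnerProductSpace ℝ F]
    {n : ℕ} (z : Fin n → E) (y : Fin n → ℝ)
    (C γ : ℝ) (hγ : 0 < γ)
    (ztilde : F) (hzt : ztilde ≠ 0) (zt : Fin n → F) (hzteq : ∀ i, zt i = ztilde) :
    ∀ M : ℝ, ∃ (w : E) (b : ℝ) (wt : F) (bt : ℝ),
      (∀ i, y i * (⟪w, z i⟫ + b) ≥ 1 - (⟪wt, zt i⟫ + bt) ∧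
        0 ≤ ⟪wt, zt i⟫ + bt) ∧
      (1 / 2) * (‖w‖ ^ 2 - γ * ‖wt‖ ^ 2) + C * ∑ i, (⟪wt, zt i⟫ + bt) < M := by
  intro M
  have hzt_pos : 0 < ‖ztilde‖ := norm_pos_iff.mpr hzt
  obtain ⟨t, ht⟩ := exists_sub_mul_sq_lt (a := γ * ‖ztilde‖ ^ 2 / 2) (by positivity) (C * n) M
  -- Every slack `⟪wt, zt i⟫ + bt` equals `1`, so only `-γ‖wt‖²/2` varies with `t`.
  have hslack (i : Fin n) : ⟪t • ztilde, zt i⟫ + (1 - t * ‖ztilde‖ ^ 2) = 1 := by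
    rw [hzteq i, real_inner_smul_self_add_one_sub_mul_norm_sq]
  refine ⟨0, 0, t • ztilde, 1 - t * ‖ztilde‖ ^ 2, fun i => ?_, ?_⟩
  · simp [hslack i]
  · simp only [hslack, Finset.sum_const, Finset.card_univ, Fintype.card_fin, nsmul_eq_mul,
      mul_one, norm_zero, norm_smul, Real.norm_eq_abs, mul_pow, sq_abs]
    linarith

/-- The SVM- objective is unbounded below on its feasible set, for any `C > 0`,
`γ > 0` and any nonzero correcting vector (all `z̃_i` equal to `z̃`). -/
theorem svm_minus_unbounded_below
    {E F : Type*} [NormedAddCommGroup E] [InnerProductSpace ℝ E]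
    [NormedAddCommGroup F] [InnerProductSpace ℝ F]
    {n : ℕ} (z : Fin n → E) (y : Fin n → ℝ)
    (C γ : ℝ) (hC : 0 < C) (hγ : 0 < γ)
    (ztilde : F) (hzt : ztilde ≠ 0) (zt : Fin n → F) (hzteq : ∀ i, zt i = ztilde) :
    ∀ M : ℝ, ∃ (w : E) (b : ℝ) (wt : F) (bt : ℝ),
      (∀ i, y i * (⟪w, z i⟫ + b) ≥ 1 - (⟪wt, zt i⟫ + bt) ∧
        0 ≤ ⟪wt, zt i⟫ + bt) ∧
      (1 / 2) * (‖w‖ ^ 2 - γ * ‖wt‖ ^ 2) + C * ∑ i, (⟪wt, zt i⟫ + bt) < M :=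
  svm_minus_unbounded_below_general z y C γ hγ ztilde hzt zt hzteq
end

section
/- Block matrix invertibility in the weight-gradient formula: let K be an n x n symmetric positive definite matrix and v in R^n a nonzero vector with nonnegative entries. Then the (n+1) x (n+1) block matrix M = [[I + diag(v) K, v], [1^T, 0]] is invertible. -/
/-!
A kernel vector `(x, t)` of the block matrix satisfies `x = -diag(v) w` with `w = K x + t 𝟙`, and
`𝟙ᵀ x = 0`. Hence `xᵀ K x = xᵀ w = -∑ vᵢ wᵢ² ≤ 0`, so `x = 0` by positive definiteness, and then
`t v = 0` with `v ≠ 0` forces `t = 0`.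
-/

open Matrix Finset

section

variable {m : Type*} [Fintype m]

theorem dotProduct_mulVec_nonpos_of_eq_neg_mul {K : Matrix m m ℝ} {v x : m → ℝ} {t : ℝ}
    (hv0 : 0 ≤ v) (hx : ∀ i, x i = -(v i * ((K *ᵥ x) i + t))) (hsum : ∑ i, x i = 0) :
    x ⬝ᵥ K *ᵥ x ≤ 0 := by
  set w : m → ℝ := fun i => (K *ᵥ x) i + t
  calc x ⬝ᵥ K *ᵥ x = ∑ i, x i * w i := by
        simp only [w, mul_add, sum_add_distrib, ← sum_mul, hsum, zero_mul, add_zero, dotProduct]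
    _ = -∑ i, v i * w i ^ 2 := by
        rw [← sum_neg_distrib]
        refine sum_congr rfl fun i _ => ?_
        rw [hx i]
        ring
    _ ≤ 0 := neg_nonpos.2 (sum_nonneg fun i _ => mul_nonneg (hv0 i) (sq_nonneg _))

variable [DecidableEq m]

theorem isUnit_fromBlocks_one_add_diagonal_mul_replicateCol {K : Matrix m m ℝ} (hK : K.PosDef)
    {v : m → ℝ} (hv : v ≠ 0) (hv0 : 0 ≤ v) :
    IsUnit (fromBlocks (1 + diagonal v * K) (replicateCol Unit v) (replicateRow Unit 1) 0) := by
  rw [isUnit_iff_isUnit_det, isUnit_iff_ne_zero, Ne, ← exists_mulVec_eq_zero_iff]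
  rintro ⟨z, hz0, hz⟩
  obtain ⟨x, s, rfl⟩ : ∃ x s, z = Sum.elim x s := ⟨_, _, (Sum.elim_comp_inl_inr z).symm⟩
  rw [fromBlocks_mulVec] at hz
  have htop : ∀ i, x i = -(v i * ((K *ᵥ x) i + s ())) := by
    intro i
    have := congrFun hz (Sum.inl i)
    simp only [Sum.elim_comp_inl, Sum.elim_comp_inr, add_mulVec, one_mulVec, ← mulVec_mulVec,
      Pi.add_apply, mulVec_diagonal, Sum.elim_inl, Pi.zero_apply] at this
    have hcol : (replicateCol Unit v *ᵥ s) i = v i * s () := by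
      simp [mulVec, dotProduct]
    linarith
  have hbot : ∑ i, x i = 0 := by
    simpa [mulVec, dotProduct] using congrFun hz (Sum.inr ())
  have hx : x = 0 := by
    by_contra hx
    have hpos := hK.dotProduct_mulVec_pos hx
    rw [star_trivial] at hpos
    exact (dotProduct_mulVec_nonpos_of_eq_neg_mul hv0 htop hbot).not_gt hpos
  have hs : s () = 0 := by
    obtain ⟨j, hj : v j ≠ 0⟩ := Function.ne_iff.mp hv
    simpa [hx, hj] using htop j
  apply hz0
  ext (i | ⟨⟩)
  · exact congrFun hx i
  · exact hs

end

/-- Block matrix invertibility in the weight-gradient formula: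
for `K` symmetric positive definite and `v ≠ 0` with nonnegative entries,
the block matrix `[[I + diag(v) K, v], [1ᵀ, 0]]` is invertible. -/
theorem block_matrix_invertible
    {n : ℕ} (K : Matrix (Fin n) (Fin n) ℝ) (hK : K.PosDef)
    (v : Fin n → ℝ) (hv : v ≠ 0) (hv0 : ∀ i, 0 ≤ v i) :
    IsUnit (Matrix.fromBlocks
      (1 + Matrix.diagonal v * K)
      (Matrix.of fun (i : Fin n) (_ : Unit) => v i)
      (Matrix.of fun (_ : Unit) (_ : Fin n) => (1 : ℝ))
      (0 : Matrix Unit Unit ℝ)) :=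
  isUnit_fromBlocks_one_add_diagonal_mul_replicateCol hK hv hv0
end
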